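/- Let S be the set of all nontrivial identities over alphabets of at most four variables that are satisfied by the hypoplactic monoid hypo, excluding the identity (L) xyzxty ≈ yxzxty and all identities equivalent to it. Then (L) is not a consequence of S; semantically, there exists a monoid that satisfies every identity in S but does not satisfy (L). -/

import Mathlib

open FreeMonoid

/-- The alphabet `A = {1 < 2 < 3 < ...}` of positive integers. -/
abbrev Alph : Type := ℕ+

/-- The finite alphabet `A_n = {1 < ... < n}`. -/
abbrev AlphN (n : ℕ) : Type := {a : ℕ+ // (a : ℕ) ≤ n}

/-- The defining relations of the hypoplactic monoid. -/
def HypoRel (u v : FreeMonoid Alph) : Prop :=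
  (∃ a b c : Alph, a ≤ b ∧ b < c ∧
      u = of a * of c * of b ∧ v = of c * of a * of b) ∨
  (∃ a b c : Alph, a < b ∧ b ≤ c ∧
      u = of b * of a * of c ∧ v = of b * of c * of a) ∨
  (∃ a b c d : Alph, a ≤ b ∧ b < c ∧ c ≤ d ∧
      u = of c * of a * of d * of b ∧ v = of a * of c * of b * of d) ∨
  (∃ a b c d : Alph, a < b ∧ b ≤ c ∧ c < d ∧
      u = of b * of d * of a * of c ∧ v = of d * of b * of c * of a)

/-- The hypoplactic congruence on `A*`: the congruence generated by `HypoRel`. -/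
def hypoCon : Con (FreeMonoid Alph) := conGen HypoRel

/-- The infinite-rank hypoplactic monoid `hypo`. -/
abbrev Hypo : Type := hypoCon.Quotient

/-- The inclusion of `A_n*` into `A*`. -/
def inclN (n : ℕ) : FreeMonoid (AlphN n) →* FreeMonoid Alph :=
  FreeMonoid.map Subtype.val

/-- The hypoplactic congruence restricted to `A_n*`. -/
def hypoConN (n : ℕ) : Con (FreeMonoid (AlphN n)) :=
  hypoCon.comap (inclN n) (fun x y => map_mul (inclN n) x y)

/-- The rank-`n` hypoplactic monoid `hypo_n`. -/
abbrev HypoN (n : ℕ) : Type := (hypoConN n).Quotient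

/-- The letter `1` of `A_2`. -/
def a1 : AlphN 2 := ⟨1, by norm_num⟩

/-- The letter `2` of `A_2`. -/
def a2 : AlphN 2 := ⟨2, by norm_num⟩

/-- The homomorphism `φ_{ij} : A* → hypo_2`, sending `i ↦ [1]`, `j ↦ [2]`,
`a ↦ [21]` for `i < a < j`, and every other letter to the identity. -/
def phi (i j : Alph) : FreeMonoid Alph →* HypoN 2 :=
  FreeMonoid.lift fun a =>
    if a = i then (hypoConN 2).mk' (of a1)
    else if a = j then (hypoConN 2).mk' (of a2)
    else if i < a ∧ a < j then (hypoConN 2).mk' (of a2 * of a1)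
    else 1

/-- A monoid `M` satisfies the identity `u ≈ v` (over the alphabet of variables `X`)
if every homomorphic evaluation of the two words in `M` gives equal values. -/
def MSatisfies (M : Type*) [Monoid M] {X : Type*} (u v : FreeMonoid X) : Prop :=
  ∀ ψ : FreeMonoid X →* M, ψ u = ψ v

/-- An identity `u ≈ v` is balanced if every variable occurs the same number of
times in `u` as in `v`. -/
def IsBalanced {X : Type*} [DecidableEq X] (u v : FreeMonoid X) : Prop :=
  ∀ x : X, u.toList.count x = v.toList.count x

/-- The left side of identity (L): `xyzxty` (variables `x = 0`, `y = 1`, `z = 2`, `t = 3`). -/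
def wL1 : FreeMonoid (Fin 4) := of 0 * of 1 * of 2 * of 0 * of 3 * of 1
/-- The right side of identity (L): `yxzxty`. -/
def wL2 : FreeMonoid (Fin 4) := of 1 * of 0 * of 2 * of 0 * of 3 * of 1
/-- The left side of identity (M): `xzxytx`. -/
def wM1 : FreeMonoid (Fin 4) := of 0 * of 2 * of 0 * of 1 * of 3 * of 0
/-- The right side of identity (M): `xzyxtx`. -/
def wM2 : FreeMonoid (Fin 4) := of 0 * of 2 * of 1 * of 0 * of 3 * of 0
/-- The left side of identity (R): `xzytxy`. -/
def wR1 : FreeMonoid (Fin 4) := of 0 * of 2 * of 1 * of 3 * of 0 * of 1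
/-- The right side of identity (R): `xzytyx`. -/
def wR2 : FreeMonoid (Fin 4) := of 0 * of 2 * of 1 * of 3 * of 1 * of 0

/-- Two identities (over the same alphabet of variables) are equivalent if one is
obtained from the other by renaming variables via a bijection of the variables
and/or swapping the two sides. -/
def EquivIdent {X : Type*} (p q : FreeMonoid X × FreeMonoid X) : Prop :=
  ∃ σ : X ≃ X,
    (FreeMonoid.map σ p.1 = q.1 ∧ FreeMonoid.map σ p.2 = q.2) ∨
    (FreeMonoid.map σ p.1 = q.2 ∧ FreeMonoid.map σ p.2 = q.1)

/-!
Call two words *pair-equivalent* if they are permutations of each other and have the same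
scattered subwords of length two. Both sides of an identity of `hypo` are pair-equivalent: evaluate
them at substitutions into the letters `1, 2, 3`, and note that the defining relations preserve
the number of occurrences of each letter and whether some `2` occurs before some `1`.

Let `M` be the quotient of the free monoid on `x, y, z, t` by pair-equivalence, refined so that
every renaming of a side of (L) (a *critical* word) is alone in its class. This is still a
congruence, because no nonempty proper prefix of one side of (L) is pair-equivalent to the prefix
of the same length of the other side; and `M` fails (L). If an identity `p` of `hypo` failed in
`M`, some substitution `φ` would map it to the two distinct sides of a renaming of (L); a finite
search over all ways of cutting `xyzxty` into the blocks `φ(x), φ(y), …` shows that then `p` is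
itself a renaming of (L).
-/

open List

section Words

variable {α β : Type*}

theorem List.pair_sublist_append_iff {s t : α} {u v : List α} :
    [s, t] <+ u ++ v ↔ [s, t] <+ u ∨ [s, t] <+ v ∨ (s ∈ u ∧ t ∈ v) := by
  rw [sublist_append_iff]
  constructor
  · rintro ⟨_ | ⟨a, _ | ⟨b, _ | _⟩⟩, l₂, he, h₁, h₂⟩ <;> simp at he
    · subst he; exact Or.inr (Or.inl h₂)
    · obtain ⟨rfl, rfl⟩ := he
      exact Or.inr (Or.inr ⟨singleton_sublist.1 h₁, singleton_sublist.1 h₂⟩)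
    · obtain ⟨rfl, rfl, rfl⟩ := he; exact Or.inl h₁
  · rintro (h | h | ⟨hs, ht⟩)
    · exact ⟨[s, t], [], by simp, h, nil_sublist _⟩
    · exact ⟨[], [s, t], rfl, nil_sublist _, h⟩
    · exact ⟨[s], [t], rfl, singleton_sublist.2 hs, singleton_sublist.2 ht⟩

theorem List.pair_sublist_filter_iff {p : α → Bool} {s t : α} {l : List α} :
    [s, t] <+ l.filter p ↔ p s ∧ p t ∧ [s, t] <+ l := by
  constructor
  · intro h
    have hmem : ∀ a ∈ [s, t], p a := fun a ha => (mem_filter.1 (h.subset ha)).2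
    exact ⟨hmem s (by simp), hmem t (by simp), h.trans (filter_sublist)⟩
  · rintro ⟨hs, ht, h⟩
    simpa [filter_cons, hs, ht] using h.filter p

def PairEquiv (u v : List α) : Prop :=
  u ~ v ∧ ∀ s t : α, [s, t] <+ u ↔ [s, t] <+ v

instance [DecidableEq α] [Fintype α] (u v : List α) : Decidable (PairEquiv u v) := by
  unfold PairEquiv; infer_instance

namespace PairEquiv

theorem refl (u : List α) : PairEquiv u u := ⟨.refl u, fun _ _ => .rfl⟩

theorem symm {u v : List α} (h : PairEquiv u v) : PairEquiv v u :=
  ⟨h.1.symm, fun s t => (h.2 s t).symm⟩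

theorem trans {u v w : List α} (h : PairEquiv u v) (h' : PairEquiv v w) :
    PairEquiv u w :=
  ⟨h.1.trans h'.1, fun s t => (h.2 s t).trans (h'.2 s t)⟩

theorem length_eq {u v : List α} (h : PairEquiv u v) : u.length = v.length := h.1.length_eq

theorem eq_nil {u : List α} (h : PairEquiv u []) : u = [] := h.1.eq_nil

theorem map (f : α → β) {u v : List α} (h : PairEquiv u v) :
    PairEquiv (u.map f) (v.map f) := by
  refine ⟨h.1.map f, fun a b => ?_⟩
  have key (w : List α) : [a, b] <+ w.map f ↔ ∃ s t, [s, t] <+ w ∧ f s = a ∧ f t = b := by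
    rw [sublist_map_iff]
    constructor
    · rintro ⟨_ | ⟨s, _ | ⟨t, _ | _⟩⟩, hl, he⟩ <;> simp at he
      exact ⟨s, t, hl, he.1.symm, he.2.symm⟩
    · rintro ⟨s, t, hl, rfl, rfl⟩
      exact ⟨[s, t], hl, rfl⟩
  simp only [key, h.2]

theorem append {u u' v v' : List α} (hu : PairEquiv u u') (hv : PairEquiv v v') :
    PairEquiv (u ++ v) (u' ++ v') :=
  ⟨hu.1.append hv.1, fun s t => by
    simp only [pair_sublist_append_iff, hu.2, hv.2, hu.1.mem_iff, hv.1.mem_iff]⟩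

theorem filter (p : α → Bool) {u v : List α} (h : PairEquiv u v) :
    PairEquiv (u.filter p) (v.filter p) :=
  ⟨h.1.filter p, fun s t => by simp only [pair_sublist_filter_iff, h.2]⟩

end PairEquiv

def pairCon : Con (FreeMonoid α) where
  r u v := PairEquiv u.toList v.toList
  iseqv := ⟨fun _ => .refl _, .symm, .trans⟩
  mul' := PairEquiv.append

/-- All ways to cut a list into nonempty consecutive blocks. -/
def blockings : List α → List (List (List α))
  | [] => [[]]
  | a :: l => (blockings l).flatMap fun
      | [] => [[[a]]]
      | b :: bs => [[a] :: b :: bs, (a :: b) :: bs]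

theorem mem_blockings {bs : List (List α)} (hbs : ∀ b ∈ bs, b ≠ []) :
    bs ∈ blockings bs.flatten := by
  induction bs with
  | nil => simp [blockings]
  | cons b bs ih =>
    have ih := ih fun b' hb' => hbs b' (mem_cons_of_mem _ hb')
    obtain ⟨a, b, rfl⟩ := exists_cons_of_ne_nil (hbs b mem_cons_self)
    induction b generalizing a with
    | nil =>
      simp only [flatten_cons, singleton_append, blockings, mem_flatMap]
      exact ⟨bs, ih, by cases bs <;> simp⟩
    | cons c b ihb =>
      have := ihb c (by simpa using hbs)
      simp only [flatten_cons, cons_append, blockings, mem_flatMap] at this ⊢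
      exact ⟨_, this, by simp⟩

/-- Reads off the block assigned to the first occurrence of `m` in `u`. -/
def assign [BEq α] (u : List α) (bs : List (List β)) (m : α) : List β :=
  ((u.zip bs).lookup m).getD []

theorem assign_map [DecidableEq α] (u : List α) (g : α → List β) {m : α} (hm : m ∈ u) :
    assign u (u.map g) m = g m := by
  induction u with
  | nil => simp at hm
  | cons a u ih =>
    by_cases h : m = a
    · subst h; simp [assign]
    · have hma : (m == a) = false := beq_false_of_ne h
      simpa [assign, lookup, hma] using ih (by simpa [h] using hm)

/-- All words over `A` whose `g`-images, all nonempty, concatenate to `W`;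
`n` bounds the length of the words. -/
def parses [DecidableEq β] (A : List α) (g : α → List β) : ℕ → List β → List (List α)
  | _, [] => [[]]
  | 0, _ :: _ => []
  | n + 1, W@(_ :: _) => A.flatMap fun m =>
      if g m ≠ [] ∧ g m <+: W then (parses A g n (W.drop (g m).length)).map (m :: ·) else []

theorem mem_parses [DecidableEq β] {A : List α} {g : α → List β} {v : List α}
    (hA : ∀ m ∈ v, m ∈ A) (hg : ∀ m ∈ v, g m ≠ []) {n : ℕ} (hn : v.length ≤ n) :
    v ∈ parses A g n (v.flatMap g) := by
  induction v generalizing n with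
  | nil => cases n <;> simp [parses]
  | cons m v ih =>
    obtain ⟨n, rfl⟩ := Nat.exists_eq_add_of_le' (Nat.lt_of_lt_of_le (Nat.zero_lt_succ _) hn)
    obtain ⟨a, w, hw⟩ := exists_cons_of_ne_nil (hg m mem_cons_self)
    have ih := ih (fun m' h => hA m' (mem_cons_of_mem _ h))
      (fun m' h => hg m' (mem_cons_of_mem _ h)) (n := n) (by simpa using hn)
    rw [flatMap_cons, hw, cons_append, parses, mem_flatMap]
    refine ⟨m, hA m mem_cons_self, ?_⟩
    rw [← cons_append, ← hw, if_pos ⟨hg m mem_cons_self, prefix_append _ _⟩, drop_left]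
    exact mem_map_of_mem ih

theorem List.length_le_length_flatMap {g : α → List β} {v : List α}
    (hg : ∀ m ∈ v, g m ≠ []) :
    v.length ≤ (v.flatMap g).length := by
  induction v with
  | nil => simp
  | cons m v ih =>
    have := length_pos_of_ne_nil (hg m mem_cons_self)
    have := ih fun m' h => hg m' (mem_cons_of_mem _ h)
    simp only [flatMap_cons, length_append, length_cons]
    omega

theorem List.mem_sections_replicate {A u : List α} (hu : ∀ m ∈ u, m ∈ A) :
    u ∈ sections (replicate u.length A) := by
  induction u with
  | nil => simp
  | cons a u ih =>
    exact mem_sections.2 (.cons (hu a mem_cons_self)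
      (mem_sections.1 (ih fun m h => hu m (mem_cons_of_mem _ h))))

theorem List.flatMap_filter_ne_nil (g : α → List β) (w : List α) :
    (w.filter fun m => g m ≠ []).flatMap g = w.flatMap g := by
  induction w with
  | nil => rfl
  | cons m w ih => by_cases h : g m = [] <;> simp_all

theorem FreeMonoid.toList_hom_apply (φ : FreeMonoid α →* FreeMonoid β)
    (w : FreeMonoid α) : (φ w).toList = w.toList.flatMap fun i => (φ (of i)).toList := by
  induction w using FreeMonoid.inductionOn' with
  | one => simp
  | of_mul i w ih => simp [ih]

end Words

/-- Records whether a word contains `a`, contains `b`, and contains `a` before `b`. -/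
@[ext] structure PairMonoid where
  fst : Bool
  snd : Bool
  fstSnd : Bool
deriving DecidableEq

namespace PairMonoid

instance : Mul PairMonoid :=
  ⟨fun x y => ⟨x.fst || y.fst, x.snd || y.snd, x.fstSnd || y.fstSnd || (x.fst && y.snd)⟩⟩

instance : One PairMonoid := ⟨⟨false, false, false⟩⟩

theorem mul_def (x y : PairMonoid) :
    x * y = ⟨x.fst || y.fst, x.snd || y.snd, x.fstSnd || y.fstSnd || (x.fst && y.snd)⟩ := rfl

theorem one_def : (1 : PairMonoid) = ⟨false, false, false⟩ := rfl

instance : Monoid PairMonoid where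
  mul_assoc := by
    rintro ⟨a, b, c⟩ ⟨d, e, f⟩ ⟨g, h, i⟩
    simp only [mul_def, mk.injEq]
    revert a b c d e f g h i
    decide
  one_mul := by rintro ⟨a, b, c⟩; simp [mul_def, one_def]
  mul_one := by rintro ⟨a, b, c⟩; simp [mul_def, one_def]

end PairMonoid

def pairHom {α : Type*} [DecidableEq α] (a b : α) : FreeMonoid α →* PairMonoid :=
  FreeMonoid.lift fun c => ⟨c = a, c = b, false⟩

theorem pairHom_apply {α : Type*} [DecidableEq α] (a b : α) (w : FreeMonoid α) :
    pairHom a b w = ⟨a ∈ w.toList, b ∈ w.toList, [a, b] <+ w.toList⟩ := by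
  induction w using FreeMonoid.inductionOn' with
  | one => rfl
  | of_mul c w ih =>
    rw [map_mul, ih]
    ext <;> simp [pairHom, PairMonoid.mul_def, sublist_cons_iff, eq_comm]

theorem MSatisfies.comp {M X Y : Type*} [Monoid M] {u v : FreeMonoid X}
    (h : MSatisfies M u v) (φ : FreeMonoid X →* FreeMonoid Y) : MSatisfies M (φ u) (φ v) :=
  fun ψ => h (ψ.comp φ)

theorem MSatisfies.symm {M X : Type*} [Monoid M] {u v : FreeMonoid X} (h : MSatisfies M u v) :
    MSatisfies M v u :=
  fun ψ => (h ψ).symm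

theorem EquivIdent.swap {X : Type*} {u v : FreeMonoid X} {q : FreeMonoid X × FreeMonoid X}
    (h : EquivIdent (v, u) q) : EquivIdent (u, v) q :=
  let ⟨σ, hσ⟩ := h
  ⟨σ, hσ.symm.imp And.symm And.symm⟩

theorem Con.msatisfies_quotient {X Y : Type*} (c : Con (FreeMonoid Y)) {u v : FreeMonoid X}
    (h : ∀ φ : FreeMonoid X →* FreeMonoid Y, c (φ u) (φ v)) : MSatisfies c.Quotient u v := by
  intro ψ
  choose g hg using fun i => c.mk'_surjective (ψ (of i))
  have hψ : ψ = c.mk'.comp (FreeMonoid.lift g) := FreeMonoid.hom_eq fun i => (hg i).symm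
  exact hψ ▸ (c.eq).2 (h _)

def Con.isolate {M : Type*} [Monoid M] (r : Con M) (C : Set M)
    (hC : ∀ {w x y z : M}, r w x → (w ∈ C ∨ x ∈ C → w = x) → r y z →
      (y ∈ C ∨ z ∈ C → y = z) → w * y ∈ C → w * y = x * z) : Con M where
  r u v := r u v ∧ (u ∈ C ∨ v ∈ C → u = v)
  iseqv :=
    { refl := fun u => ⟨r.refl u, fun _ => rfl⟩
      symm := fun ⟨h, hC⟩ => ⟨r.symm h, fun hv => (hC hv.symm).symm⟩
      trans := fun {u v w} ⟨huv, hC₁⟩ ⟨hvw, hC₂⟩ => ⟨r.trans huv hvw, by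
        rintro (hu | hw)
        · obtain rfl := hC₁ (.inl hu); exact hC₂ (.inl hu)
        · obtain rfl := hC₂ (.inr hw); exact hC₁ (.inr hw)⟩ }
  mul' := fun {w x y z} ⟨hwx, hC₁⟩ ⟨hyz, hC₂⟩ => ⟨r.mul hwx hyz, by
    rintro (h | h)
    · exact hC hwx hC₁ hyz hC₂ h
    · exact (hC (r.symm hwx) (fun h' => (hC₁ h'.symm).symm) (r.symm hyz)
        (fun h' => (hC₂ h'.symm).symm) h).symm⟩

theorem hypoRel_perm {u v : FreeMonoid Alph} (h : HypoRel u v) : u.toList ~ v.toList := by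
  rcases h with ⟨a, b, c, -, -, rfl, rfl⟩ | ⟨a, b, c, -, -, rfl, rfl⟩ |
    ⟨a, b, c, d, -, -, -, rfl, rfl⟩ | ⟨a, b, c, d, -, -, -, rfl, rfl⟩ <;>
  exact perm_iff_count.2 fun x => by simp [count_cons]; omega

theorem hypoCon_le_ker_count (a : Alph) : hypoCon ≤ Con.ker (FreeMonoid.count a) :=
  Con.conGen_le.2 fun _ _ h => congrArg Multiplicative.ofAdd ((hypoRel_perm h).count_eq a)

/-- Letters `1`, `2` and `≥ 3` are the three classes `pairHom 2 1` distinguishes. -/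
def letterClass (c : Alph) : Fin 3 := ⟨min (c : ℕ) 3 - 1, by omega⟩

def classValue : Fin 3 → PairMonoid := ![⟨false, true, false⟩, ⟨true, false, false⟩, 1]

theorem pairHom_two_one_of (c : Alph) :
    pairHom 2 1 (of c) = classValue (letterClass c) := by
  simp only [pairHom, FreeMonoid.lift_eval_of]
  have hc : (c : ℕ) = 1 ∨ (c : ℕ) = 2 ∨ 3 ≤ (c : ℕ) := by have := c.pos; omega
  rcases hc with hc | hc | hc
  · obtain rfl : c = 1 := PNat.eq hc; decide
  · obtain rfl : c = 2 := PNat.eq hc; decide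
  · have h1 : c ≠ 1 := fun h => by subst h; simp at hc
    have h2 : c ≠ 2 := fun h => by subst h; simp at hc
    rw [show letterClass c = 2 from Fin.ext (by simp [letterClass]; omega)]
    simp [h1, h2, classValue, PairMonoid.one_def]

theorem letterClass_mono {a b : Alph} (h : a ≤ b) : letterClass a ≤ letterClass b := by
  rw [Fin.le_def]; simp only [letterClass]; have : (a : ℕ) ≤ b := h; omega

theorem letterClass_lt {a b : Alph} (h : a < b) :
    letterClass a < letterClass b ∨ letterClass a = 2 := by
  have : (a : ℕ) < b := h
  rw [Fin.lt_def, Fin.ext_iff]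
  show min (a : ℕ) 3 - 1 < min (b : ℕ) 3 - 1 ∨ min (a : ℕ) 3 - 1 = 2
  have := a.pos
  omega

theorem hypoRel_pairHom {u v : FreeMonoid Alph} (h : HypoRel u v) :
    pairHom 2 1 u = pairHom 2 1 v := by
  rcases h with ⟨a, b, c, hab, hbc, rfl, rfl⟩ | ⟨a, b, c, hab, hbc, rfl, rfl⟩ |
    ⟨a, b, c, d, hab, hbc, hcd, rfl, rfl⟩ | ⟨a, b, c, d, hab, hbc, hcd, rfl, rfl⟩
  all_goals simp only [map_mul, pairHom_two_one_of]
  · have := letterClass_mono hab; have := letterClass_mono hbc.le; have := letterClass_lt hbc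
    generalize letterClass a = i, letterClass b = j, letterClass c = k at *
    revert i j k; decide
  · have := letterClass_lt hab; have := letterClass_mono hab.le; have := letterClass_mono hbc
    generalize letterClass a = i, letterClass b = j, letterClass c = k at *
    revert i j k; decide
  · have := letterClass_mono hab; have := letterClass_lt hbc; have := letterClass_mono hbc.le
    have := letterClass_mono hcd
    generalize letterClass a = i, letterClass b = j, letterClass c = k, letterClass d = l at *
    revert i j k l; decide
  · have := letterClass_lt hab; have := letterClass_mono hab.le; have := letterClass_mono hbc
    have := letterClass_lt hcd
    generalize letterClass a = i, letterClass b = j, letterClass c = k, letterClass d = l at *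
    revert i j k l; decide

theorem hypoCon_le_ker_pairHom : hypoCon ≤ Con.ker (pairHom (2 : Alph) 1) :=
  Con.conGen_le.2 fun _ _ => hypoRel_pairHom

theorem hypoCon_of_msatisfies {X : Type*} {u v : FreeMonoid X} (h : MSatisfies Hypo u v)
    (φ : FreeMonoid X →* FreeMonoid Alph) : hypoCon (φ u) (φ v) :=
  (Con.eq hypoCon).1 (h (hypoCon.mk'.comp φ))

theorem perm_of_msatisfies_hypo {X : Type*} [DecidableEq X] {u v : FreeMonoid X}
    (h : MSatisfies Hypo u v) : u.toList ~ v.toList := by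
  refine perm_iff_count.2 fun s => ?_
  let f : X → Alph := fun i => if i = s then 1 else 2
  have hf : (FreeMonoid.count 1).comp (FreeMonoid.map f) = FreeMonoid.count s :=
    FreeMonoid.hom_eq fun i => by by_cases hi : i = s <;> simp [f, hi, FreeMonoid.count_of]
  have := hypoCon_le_ker_count 1 (hypoCon_of_msatisfies h (FreeMonoid.map f))
  rw [Con.ker_rel, ← MonoidHom.comp_apply, ← MonoidHom.comp_apply, hf] at this
  exact Multiplicative.ofAdd.injective this

theorem PairEquiv.of_msatisfies_hypo {X : Type*} [DecidableEq X] {u v : FreeMonoid X}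
    (h : MSatisfies Hypo u v) : PairEquiv u.toList v.toList := by
  have hperm := perm_of_msatisfies_hypo h
  refine ⟨hperm, fun s t => ?_⟩
  by_cases hst : s = t
  · subst hst
    simp only [show [s, s] = replicate 2 s from rfl, replicate_sublist_iff, hperm.count_eq]
  let f : X → Alph := fun i => if i = s then 2 else if i = t then 1 else 3
  have hf : (pairHom 2 1).comp (FreeMonoid.map f) = pairHom s t :=
    FreeMonoid.hom_eq fun i => by
      by_cases his : i = s <;> by_cases hit : i = t <;>
        simp [f, pairHom, his, hit, hst, Ne.symm hst]
  have := hypoCon_le_ker_pairHom (hypoCon_of_msatisfies h (FreeMonoid.map f))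
  rw [Con.ker_rel, ← MonoidHom.comp_apply, ← MonoidHom.comp_apply, hf, pairHom_apply,
    pairHom_apply] at this
  simpa using congrArg PairMonoid.fstSnd this

def IsLSide (l : List (Fin 4)) : Prop := l = wL1.toList ∨ l = wL2.toList

theorem wL1_pairEquiv_wL2 : PairEquiv wL1.toList wL2.toList := by decide

theorem IsLSide.length {l : List (Fin 4)} (h : IsLSide l) : l.length = 6 := by
  rcases h with rfl | rfl <;> rfl

set_option maxRecDepth 4000 in
theorem IsLSide.of_pairEquiv {l l' : List (Fin 4)} (hl : IsLSide l) (h : PairEquiv l l') :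
    IsLSide l' := by
  have key : ∀ l' ∈ wL1.toList.permutations', PairEquiv wL1.toList l' → IsLSide l' := by
    unfold IsLSide; decide
  replace h : PairEquiv wL1.toList l' := by
    rcases hl with rfl | rfl
    exacts [h, wL1_pairEquiv_wL2.trans h]
  exact key l' (mem_permutations'.2 h.1.symm) h

theorem IsLSide.eq_of_pairEquiv_take {l l' : List (Fin 4)} (hl : IsLSide l) (hl' : IsLSide l')
    {k : ℕ} (hk₀ : k ≠ 0) (hk : k < 6) (h : PairEquiv (l.take k) (l'.take k)) : l = l' := by
  have key : ∀ l ∈ [wL1.toList, wL2.toList], ∀ l' ∈ [wL1.toList, wL2.toList],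
      ∀ k ∈ range 6, k ≠ 0 → PairEquiv (l.take k) (l'.take k) → l = l' := by
    decide
  exact key l (by rcases hl with rfl | rfl <;> simp) l' (by rcases hl' with rfl | rfl <;> simp)
    k (mem_range.2 hk) hk₀ h

theorem mem_wL1 (m : Fin 4) : m ∈ wL1.toList := by fin_cases m <;> decide

def IsCritical (w : FreeMonoid (Fin 4)) : Prop :=
  ∃ σ : Equiv.Perm (Fin 4), IsLSide (w.toList.map σ)

theorem IsCritical.mul_eq {w x y z : FreeMonoid (Fin 4)} (hc : IsCritical (w * y))
    (hwx : pairCon w x) (hyz : pairCon y z) (hw : w ≠ 1) (hy : y ≠ 1) : w * y = x * z := by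
  obtain ⟨σ, hσ⟩ := hc
  have hxz : IsLSide ((x * z).toList.map σ) := hσ.of_pairEquiv (((pairCon).mul hwx hyz).map σ)
  have hlen := hσ.length
  have hwlen : w.toList.length ≠ 0 := mt FreeMonoid.length_eq_zero.1 hw
  have hylen : y.toList.length ≠ 0 := mt FreeMonoid.length_eq_zero.1 hy
  simp only [FreeMonoid.toList_mul, map_append, length_append, length_map] at hlen
  have key := hσ.eq_of_pairEquiv_take hxz hwlen (by omega) (k := w.toList.length) (by
    simp only [FreeMonoid.toList_mul, map_append]
    rw [take_left' (by simp), take_left' (by simp [← hwx.length_eq])]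
    exact hwx.map σ)
  exact FreeMonoid.toList.injective (map_injective_iff.2 σ.injective key)

def criticalCon : Con (FreeMonoid (Fin 4)) :=
  (pairCon).isolate {w | IsCritical w} fun {w x y z} hwx hC₁ hyz hC₂ hc => by
    by_cases hw : w = 1
    · subst hw
      obtain rfl : x = 1 := FreeMonoid.toList.injective (hwx.symm.eq_nil)
      simp only [one_mul] at hc ⊢
      exact hC₂ (.inl hc)
    by_cases hy : y = 1
    · subst hy
      obtain rfl : z = 1 := FreeMonoid.toList.injective (hyz.symm.eq_nil)
      simp only [mul_one] at hc ⊢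
      exact hC₁ (.inl hc)
    exact IsCritical.mul_eq hc hwx hyz hw hy

theorem isCritical_wL1 : IsCritical wL1 := ⟨1, .inl (by simp)⟩

/-- `u` labels the blocks of a cutting of `L₁` (equal labels carry equal blocks) and `v` spells
`L₂` with the same labelled blocks; if `u` and `v` are pair-equivalent, they are a renaming of
`(L₁, L₂)`. -/
def TilingCheck (L₁ L₂ : List (Fin 4)) : Prop :=
  ∀ bs ∈ blockings L₁, ∀ u ∈ sections (replicate bs.length (finRange 4)),
    u.map (assign u bs) = bs → ∀ v ∈ parses u (assign u bs) L₂.length L₂,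
      PairEquiv u v → ∃ τ ∈ permsOfList (finRange 4), u.map τ = L₁ ∧ v.map τ = L₂

set_option maxRecDepth 100000 in
theorem tilingCheck_wL : TilingCheck wL1.toList wL2.toList := by
  unfold TilingCheck; decide +kernel

theorem TilingCheck.exists_perm {L₁ L₂ : List (Fin 4)} (hc : TilingCheck L₁ L₂)
    {g : Fin 4 → List (Fin 4)} {u v : List (Fin 4)} (huv : PairEquiv u v)
    (hg : ∀ m ∈ u, g m ≠ []) (hu : u.flatMap g = L₁) (hv : v.flatMap g = L₂) :
    ∃ τ : Equiv.Perm (Fin 4), u.map τ = L₁ ∧ v.map τ = L₂ := by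
  have hvu : ∀ m ∈ v, m ∈ u := fun m hm => huv.1.mem_iff.2 hm
  have hassign : ∀ m ∈ v, assign u (u.map g) m = g m := fun m hm => assign_map u g (hvu m hm)
  have hbs : u.map g ∈ blockings L₁ := by
    rw [← hu, flatMap_def]
    exact mem_blockings (by simpa using hg)
  have hv' : v ∈ parses u (assign u (u.map g)) L₂.length L₂ := by
    have hlen := length_le_length_flatMap fun m hm => hg m (hvu m hm)
    subst hv
    nth_rw 2 [← flatMap_congr hassign]
    exact mem_parses hvu (fun m hm => hassign m hm ▸ hg m (hvu m hm)) hlen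
  have hu' : u ∈ sections (replicate (u.map g).length (finRange 4)) := by
    simpa using mem_sections_replicate (A := finRange 4) (by simp)
  obtain ⟨τ, -, hτ⟩ := hc _ hbs u hu'
    (map_congr_left fun m hm => assign_map u g hm) v hv' huv
  exact ⟨τ, hτ⟩

theorem exists_perm_of_flatMap_eq {g : Fin 4 → List (Fin 4)} {u v : List (Fin 4)}
    (huv : PairEquiv u v) (hu : u.flatMap g = wL1.toList) (hv : v.flatMap g = wL2.toList) :
    ∃ τ : Equiv.Perm (Fin 4), u.map τ = wL1.toList ∧ v.map τ = wL2.toList := by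
  obtain ⟨τ, hτu, hτv⟩ := tilingCheck_wL.exists_perm (huv.filter fun m => g m ≠ [])
    (fun m hm => by simpa using (mem_filter.1 hm).2) ((flatMap_filter_ne_nil g u).trans hu)
    ((flatMap_filter_ne_nil g v).trans hv)
  -- `τ` maps the filtered `u` onto `xyzxty`, which contains every letter
  have hne : ∀ m, g m ≠ [] := fun m => by
    obtain ⟨m', hm', hτ⟩ := List.mem_map.1 (hτu ▸ mem_wL1 (τ m))
    obtain rfl := τ.injective hτ
    exact of_decide_eq_true (mem_filter.1 hm').2
  rw [filter_eq_self.2 fun m _ => by simpa using hne m] at hτu hτv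
  exact ⟨τ, hτu, hτv⟩

theorem eq_of_isCritical {p₁ p₂ : FreeMonoid (Fin 4)} (hsat : MSatisfies Hypo p₁ p₂)
    (hp : ¬ EquivIdent (p₁, p₂) (wL1, wL2)) (φ : FreeMonoid (Fin 4) →* FreeMonoid (Fin 4))
    (hc : IsCritical (φ p₁)) : φ p₁ = φ p₂ := by
  by_contra hne
  obtain ⟨σ, hσ₁⟩ := hc
  have hσ₂ := hσ₁.of_pairEquiv ((PairEquiv.of_msatisfies_hypo (hsat.comp φ)).map σ)
  have hne' : (φ p₁).toList.map σ ≠ (φ p₂).toList.map σ :=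
    (map_injective_iff.2 σ.injective).ne (FreeMonoid.toList.injective.ne hne)
  have hg : ∀ w, w.toList.flatMap (fun i => (φ (of i)).toList.map σ) = (φ w).toList.map σ :=
    fun w => by rw [FreeMonoid.toList_hom_apply φ w, map_flatMap]
  have hp₁₂ := PairEquiv.of_msatisfies_hypo hsat
  have hmap : ∀ {w : FreeMonoid (Fin 4)} {τ : Equiv.Perm (Fin 4)} {l : FreeMonoid (Fin 4)},
      w.toList.map τ = l.toList → FreeMonoid.map τ w = l :=
    fun h => FreeMonoid.toList.injective h
  apply hp
  rcases hσ₁ with h₁ | h₁ <;> rcases hσ₂ with h₂ | h₂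
  · exact absurd (h₁.trans h₂.symm) hne'
  · obtain ⟨τ, hτ₁, hτ₂⟩ :=
      exists_perm_of_flatMap_eq hp₁₂ ((hg p₁).trans h₁) ((hg p₂).trans h₂)
    exact ⟨τ, .inl ⟨hmap hτ₁, hmap hτ₂⟩⟩
  · obtain ⟨τ, hτ₂, hτ₁⟩ :=
      exists_perm_of_flatMap_eq hp₁₂.symm ((hg p₂).trans h₂) ((hg p₁).trans h₁)
    exact ⟨τ, .inr ⟨hmap hτ₁, hmap hτ₂⟩⟩
  · exact absurd (h₁.trans h₂.symm) hne'

/-- The identity (L) `xyzxty ≈ yxzxty` is not a consequence of the set `S` of all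
nontrivial identities in at most four variables satisfied by `hypo`, excluding (L)
itself and identities equivalent to it: there is a monoid satisfying every identity
in `S` but not satisfying (L). -/
theorem idL_not_consequence :
    ∃ (M : Type) (instM : Monoid M),
      (∀ p : FreeMonoid (Fin 4) × FreeMonoid (Fin 4),
        p.1 ≠ p.2 → MSatisfies Hypo p.1 p.2 → ¬ EquivIdent p (wL1, wL2) →
          @MSatisfies M instM _ p.1 p.2) ∧
      ¬ @MSatisfies M instM _ wL1 wL2 := by
  refine ⟨criticalCon.Quotient, inferInstance, fun p _ hsat hp => criticalCon.msatisfies_quotient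
    fun φ => ⟨PairEquiv.of_msatisfies_hypo (hsat.comp φ), ?_⟩, fun h => ?_⟩
  · rintro (hc | hc)
    · exact eq_of_isCritical hsat hp φ hc
    · exact (eq_of_isCritical hsat.symm (hp ∘ EquivIdent.swap) φ hc).symm
  · have := ((criticalCon.eq).1 (h criticalCon.mk')).2 (.inl isCritical_wL1)
    exact absurd (congrArg FreeMonoid.toList this) (by decide)
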